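/- For all vectors ζ, μ in ℝ^N and all real p with 1 < p ≤ 2, one has |ζ - μ|^p ≤ (2/(p-1)) · [((|ζ|^(p-2) ζ - |μ|^(p-2) μ) · (ζ - μ))]^(p/2) · (|ζ| + |μ|)^((2p - p²)/2). -/

import Mathlib

open Real

private theorem pLap_lemB (p a b : ℝ) (hp1 : 1 < p) (hp2 : p ≤ 2) (ha : 0 < a) (hb : 0 ≤ b) (hba : b ≤ a) :
    (p-1) * (a-b) * (a+b) ^ (p-2) ≤ a ^ (p-1) - b ^ (p-1) := by
  have hq1 : 0 ≤ p - 1 := by linarith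
  have hq2 : p - 1 ≤ 1 := by linarith
  have h1 : (a+b) ^ (p-2) ≤ a ^ (p-2) := by
    apply Real.rpow_le_rpow_of_nonpos ha (by linarith) (by linarith)
  have hber : (1 + (b/a - 1)) ^ (p-1) ≤ 1 + (p-1) * (b/a - 1) := by
    apply rpow_one_add_le_one_add_mul_self (by
      have : 0 ≤ b / a := div_nonneg hb ha.le
      linarith) hq1 hq2
  have hba' : (1 + (b/a - 1)) = b / a := by ring
  rw [hba', Real.div_rpow hb ha.le] at hber
  have hapos : (0:ℝ) < a ^ (p-1) := Real.rpow_pos_of_pos ha _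
  have h2 : b ^ (p-1) ≤ a ^ (p-1) + (p-1) * a ^ (p-2) * (b - a) := by
    have := mul_le_mul_of_nonneg_left hber hapos.le
    rw [mul_div_cancel₀ _ (ne_of_gt hapos)] at this
    have haa : a ^ (p-1) * (b/a - 1) = a ^ (p-2) * (b - a) := by
      have : a ^ (p-1) = a ^ (p-2) * a := by
        rw [← Real.rpow_add_one (ne_of_gt ha)]; ring_nf
      rw [this]; field_simp
    nlinarith [this, haa]
  nlinarith [mul_le_mul_of_nonneg_left h1 (mul_nonneg hq1 (by linarith : (0:ℝ) ≤ a - b))]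
-- Lemma C
private theorem pLap_lemC (p a b : ℝ) (hp1 : 1 < p) (hp2 : p ≤ 2) (ha : 0 ≤ a) (hb : 0 ≤ b)
    (hs : 0 < a + b) :
    (p-1) * (a-b)^2 * (a+b) ^ (p-2) ≤ (a ^ (p-1) - b ^ (p-1)) * (a-b) := by
  rcases le_total b a with h | h
  · have ha' : 0 < a := by linarith
    have := mul_le_mul_of_nonneg_right (pLap_lemB p a b hp1 hp2 ha' hb h)
      (by linarith : (0:ℝ) ≤ a - b)
    nlinarith [this]
  · have hb' : 0 < b := by linarith
    have := mul_le_mul_of_nonneg_right (pLap_lemB p b a hp1 hp2 hb' ha h)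
      (by linarith : (0:ℝ) ≤ b - a)
    rw [add_comm b a] at this
    nlinarith [this]

-- Lemma D: key scalar inequality
private theorem pLap_lemD (p a b c : ℝ) (hp1 : 1 < p) (hp2 : p ≤ 2) (ha : 0 ≤ a) (hb : 0 ≤ b)
    (hs : 0 < a + b) (hc : |c| ≤ a * b) :
    (p-1) * (a^2 + b^2 - 2*c) * (a+b) ^ (p-2) ≤
      a ^ p + b ^ p - (a ^ (p-2) + b ^ (p-2)) * c := by
  rcases eq_or_lt_of_le ha with ha0 | ha'
  · -- a = 0, so c = 0, b > 0
    have hc0 : c = 0 := by rw [← ha0] at hc; simpa using hc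
    subst hc0
    rw [← ha0]
    simp only [zero_add]
    have hb' : 0 < b := by rw [← ha0] at hs; linarith
    have h0p : (0:ℝ) ^ p = 0 := Real.zero_rpow (by positivity)
    rw [h0p]
    have hbb : b^2 * b ^ (p-2) = b ^ p := by
      rw [← Real.rpow_two, ← Real.rpow_add hb']; ring_nf
    have hbp : (0:ℝ) < b ^ p := Real.rpow_pos_of_pos hb' _
    nlinarith [hbb, hbp]
  rcases eq_or_lt_of_le hb with hb0 | hb'
  · have hc0 : c = 0 := by rw [← hb0] at hc; simpa using hc
    subst hc0
    rw [← hb0]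
    simp only [add_zero]
    have h0p : (0:ℝ) ^ p = 0 := Real.zero_rpow (by positivity)
    rw [h0p]
    have haa : a^2 * a ^ (p-2) = a ^ p := by
      rw [← Real.rpow_two, ← Real.rpow_add ha']; ring_nf
    have hap : (0:ℝ) < a ^ p := Real.rpow_pos_of_pos ha' _
    nlinarith [haa, hap]
  · -- a, b > 0
    have hK : 2 * (p-1) * (a+b) ^ (p-2) ≤ a ^ (p-2) + b ^ (p-2) := by
      have h1 : (a+b) ^ (p-2) ≤ a ^ (p-2) :=
        Real.rpow_le_rpow_of_nonpos ha' (by linarith) (by linarith)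
      have h2 : (a+b) ^ (p-2) ≤ b ^ (p-2) :=
        Real.rpow_le_rpow_of_nonpos hb' (by linarith) (by linarith)
      have h3 : (0:ℝ) < (a+b) ^ (p-2) := Real.rpow_pos_of_pos hs _
      nlinarith
    have hcab : c ≤ a * b := (abs_le.mp hc).2
    -- rpow identities
    have hA : a ^ (p-1) = a ^ (p-2) * a := by
      rw [← Real.rpow_add_one (ne_of_gt ha')]; ring_nf
    have hB : b ^ (p-1) = b ^ (p-2) * b := by
      rw [← Real.rpow_add_one (ne_of_gt hb')]; ring_nf
    have hA2 : a ^ p = a ^ (p-2) * a * a := by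
      rw [← hA, ← Real.rpow_add_one (ne_of_gt ha')]; ring_nf
    have hB2 : b ^ p = b ^ (p-2) * b * b := by
      rw [← hB, ← Real.rpow_add_one (ne_of_gt hb')]; ring_nf
    have hC := pLap_lemC p a b hp1 hp2 ha hb hs
    have hspos : (0:ℝ) < (a+b) ^ (p-2) := Real.rpow_pos_of_pos hs _
    nlinarith [mul_le_mul_of_nonneg_left hcab
      (by nlinarith : (0:ℝ) ≤ a ^ (p-2) + b ^ (p-2) - 2*(p-1)*(a+b)^(p-2))]

/-- Monotonicity inequality for the p-Laplacian, singular case `1 < p ≤ 2`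
(inequality (3.8)): for `ζ, μ ∈ ℝ^N` not both zero,
`|ζ - μ|^p ≤ (2/(p-1)) * ((|ζ|^(p-2)ζ - |μ|^(p-2)μ) ⬝ (ζ - μ))^(p/2) * (|ζ|+|μ|)^((2p - p²)/2)`.
Here `|ζ|^(p-2) ζ` is interpreted as `0` when `ζ = 0` (note `(0:ℝ) ^ r = 0` for `r < 0`
with `Real.rpow`). -/
theorem pLaplacian_monotonicity_p_le_two (N : ℕ) (p : ℝ) (hp1 : 1 < p) (hp2 : p ≤ 2)
    (ζ μ : EuclideanSpace ℝ (Fin N)) (hζμ : ζ ≠ 0 ∨ μ ≠ 0) :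
    ‖ζ - μ‖ ^ p ≤
      (2 / (p - 1)) *
        (inner ℝ ((‖ζ‖ ^ (p - 2)) • ζ - (‖μ‖ ^ (p - 2)) • μ) (ζ - μ) : ℝ) ^ (p / 2) *
        (‖ζ‖ + ‖μ‖) ^ ((2 * p - p ^ 2) / 2) := by
  set a := ‖ζ‖ with hadef
  set b := ‖μ‖ with hbdef
  have ha : 0 ≤ a := norm_nonneg _
  have hb : 0 ≤ b := norm_nonneg _
  have hp1' : (0:ℝ) < p - 1 := by linarith
  have hs : 0 < a + b := by
    rcases hζμ with h | h
    · have : 0 < a := norm_pos_iff.mpr h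
      linarith
    · have : 0 < b := norm_pos_iff.mpr h
      linarith
  set c : ℝ := inner ℝ ζ μ with hcdef
  have hcab : |c| ≤ a * b := abs_real_inner_le_norm ζ μ
  have hpow : ∀ x : ℝ, 0 ≤ x → x ^ (p-2) * x^2 = x ^ p := by
    intro x hx
    rcases eq_or_lt_of_le hx with h0 | h0
    · rw [← h0]
      rw [Real.zero_rpow (by positivity : p ≠ 0)]
      ring
    · rw [← Real.rpow_two, ← Real.rpow_add h0]; ring_nf
  have hinner : (inner ℝ ((a ^ (p - 2)) • ζ - (b ^ (p - 2)) • μ) (ζ - μ) : ℝ)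
      = a ^ p + b ^ p - (a ^ (p-2) + b ^ (p-2)) * c := by
    have hexp : (inner ℝ ((a ^ (p - 2)) • ζ - (b ^ (p - 2)) • μ) (ζ - μ) : ℝ)
        = a ^ (p-2) * ‖ζ‖^2 + b ^ (p-2) * ‖μ‖^2 - (a ^ (p-2) + b ^ (p-2)) * (inner ℝ ζ μ : ℝ) := by
      simp only [inner_sub_left, inner_sub_right, real_inner_smul_left,
        real_inner_self_eq_norm_sq, real_inner_comm μ ζ]
      ring
    rw [hexp, ← hadef, ← hbdef, ← hcdef, ← hpow a ha, ← hpow b hb]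
  have hkey : (p-1) * ‖ζ - μ‖^2 * (a+b) ^ (p-2) ≤
      (inner ℝ ((a ^ (p - 2)) • ζ - (b ^ (p - 2)) • μ) (ζ - μ) : ℝ) := by
    rw [hinner]
    have hnorm2 : ‖ζ - μ‖^2 = a^2 + b^2 - 2*c := by
      rw [@norm_sub_sq_real, ← hadef, ← hbdef, ← hcdef]; ring
    rw [hnorm2]
    exact pLap_lemD p a b c hp1 hp2 ha hb hs hcab
  set I : ℝ := (inner ℝ ((a ^ (p - 2)) • ζ - (b ^ (p - 2)) • μ) (ζ - μ) : ℝ) with hIdef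
  have hsp : (0:ℝ) < (a+b) ^ (p-2) := Real.rpow_pos_of_pos hs _
  have hs2p : (0:ℝ) < (a+b) ^ (2-p) := Real.rpow_pos_of_pos hs _
  have hI : 0 ≤ I :=
    le_trans (mul_nonneg (mul_nonneg hp1'.le (sq_nonneg _)) hsp.le) hkey
  have hcancel : (a+b) ^ (p-2) * (a+b) ^ (2-p) = 1 := by
    rw [← Real.rpow_add hs]; norm_num
  have hD2 : ‖ζ - μ‖^2 ≤ (1/(p-1)) * (I * (a+b) ^ (2-p)) := by
    have h := mul_le_mul_of_nonneg_right hkey hs2p.le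
    rw [mul_assoc, mul_assoc, hcancel, mul_one] at h
    rw [one_div, ← div_eq_inv_mul, le_div_iff₀ hp1']
    linarith [h]
  have hDp : ‖ζ - μ‖ ^ p = (‖ζ - μ‖^2 : ℝ) ^ (p/2) := by
    rw [← Real.rpow_natCast (‖ζ - μ‖) 2, ← Real.rpow_mul (norm_nonneg _),
      show ((2:ℕ):ℝ) * (p/2) = p by push_cast; ring]
  rw [hDp]
  have hstep : (‖ζ - μ‖^2 : ℝ) ^ (p/2) ≤ ((1/(p-1)) * (I * (a+b) ^ (2-p))) ^ (p/2) :=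
    Real.rpow_le_rpow (sq_nonneg _) hD2 (by linarith)
  have hsplit : ((1/(p-1)) * (I * (a+b) ^ (2-p))) ^ (p/2)
      = (1/(p-1)) ^ (p/2) * (I ^ (p/2) * (a+b) ^ ((2*p - p^2)/2)) := by
    rw [Real.mul_rpow (by positivity) (mul_nonneg hI hs2p.le),
      Real.mul_rpow hI hs2p.le, ← Real.rpow_mul hs.le,
      show (2-p) * (p/2) = (2*p - p^2)/2 by ring]
  have hcoef : (1/(p-1)) ^ (p/2) ≤ 2/(p-1) := by
    have h1r : (1:ℝ) ≤ 1/(p-1) := by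
      rw [le_div_iff₀ hp1']; linarith
    have h := Real.rpow_le_rpow_of_exponent_le h1r (show p/2 ≤ 1 by linarith)
    rw [Real.rpow_one] at h
    have h2 : (1:ℝ)/(p-1) ≤ 2/(p-1) := by
      rw [div_le_div_iff₀ hp1' hp1']; nlinarith
    linarith
  have hrest : 0 ≤ I ^ (p/2) * (a+b) ^ ((2*p - p^2)/2) :=
    mul_nonneg (Real.rpow_nonneg hI _) (Real.rpow_nonneg hs.le _)
  calc (‖ζ - μ‖^2 : ℝ) ^ (p/2) ≤ ((1/(p-1)) * (I * (a+b) ^ (2-p))) ^ (p/2) := hstep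
    _ = (1/(p-1)) ^ (p/2) * (I ^ (p/2) * (a+b) ^ ((2*p - p^2)/2)) := hsplit
    _ ≤ (2/(p-1)) * (I ^ (p/2) * (a+b) ^ ((2*p - p^2)/2)) :=
        mul_le_mul_of_nonneg_right hcoef hrest
    _ = 2/(p-1) * I ^ (p/2) * (a+b) ^ ((2*p - p^2)/2) := by ring
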